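/- In the bicrossproduct H = kM ⋉ k(G) of a matched pair of finite almost groups, the antipode S(s⊗δ_u) = (s◁u)^i ⊗ δ_{(s▷u)^i} satisfies ·(S⊗id)Δ(s⊗δ_u) = ·(id⊗S)Δ(s⊗δ_u) = η(ε(s⊗δ_u)), where ε(s⊗δ_u) = ss^i⊗δ_u if u ∈ J_G and 0 otherwise, and η(j⊗δ_n) = Σ_{n=zz^i} j⊗δ_z. -/
import Mathlib


/-- Data of an almost group: a binary operation, an `i` operation, and a subset `J`. -/
structure AlmostGroupData (G : Type*) where
  mul : G → G → G
  inv : G → G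
  J : Set G

/-- The axioms of an almost group (Definition 2.1). -/
structure IsAlmostGroup {G : Type*} (D : AlmostGroupData G) : Prop where
  mul_assoc : ∀ a b c, D.mul (D.mul a b) c = D.mul a (D.mul b c)
  inv_bijective : Function.Bijective D.inv
  J_mul_closed : ∀ a ∈ D.J, ∀ b ∈ D.J, D.mul a b ∈ D.J
  J_inv_closed : ∀ a ∈ D.J, D.inv a ∈ D.J
  inv_mul : ∀ a b, D.inv (D.mul a b) = D.mul (D.inv b) (D.inv a)
  J_central : ∀ j ∈ D.J, ∀ g, D.mul j g = D.mul g j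
  mul_inv_comm : ∀ g, D.mul g (D.inv g) = D.mul (D.inv g) g
  mul_inv_mem : ∀ g, D.mul g (D.inv g) ∈ D.J
  inv_inv : ∀ g, D.inv (D.inv g) = g

/-- Data of a matched pair of almost groups: two almost groups and two actions. -/
structure MatchedPairData (G M : Type*) where
  DG : AlmostGroupData G
  DM : AlmostGroupData M
  act : M → G → G      -- ▷ : M × G → G
  coact : M → G → M    -- ◁ : M × G → M

/-- The axioms of a matched pair of almost groups (Definition 4.1). -/
structure IsMatchedPair {G M : Type*} (P : MatchedPairData G M) : Prop where
  almostGroup_G : IsAlmostGroup P.DG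
  almostGroup_M : IsAlmostGroup P.DM
  coact_mul : ∀ s u v, P.coact s (P.DG.mul u v) = P.coact (P.coact s u) v
  mul_coact : ∀ s t u, P.coact (P.DM.mul s t) u =
      P.DM.mul (P.coact s (P.act t u)) (P.coact t u)
  mul_act : ∀ s t u, P.act (P.DM.mul s t) u = P.act s (P.act t u)
  act_mul : ∀ s u v, P.act s (P.DG.mul u v) =
      P.DG.mul (P.act s u) (P.act (P.coact s u) v)
  inv_act : ∀ s u, P.act (P.DM.inv (P.coact s u)) (P.DG.inv (P.act s u)) = P.DG.inv u
  inv_coact : ∀ s u, P.coact (P.DM.inv (P.coact s u)) (P.DG.inv (P.act s u)) = P.DM.inv s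
  actJM : ∀ j ∈ P.DM.J, ∀ u, P.act j u = u
  coactJM : ∀ j ∈ P.DM.J, ∀ u, P.coact j u = j
  actJG : ∀ s, ∀ j ∈ P.DG.J, P.act s j = j
  coactJG : ∀ s, ∀ j ∈ P.DG.J, P.coact s j = s

variable {G M k : Type*} [Fintype G] [Fintype M] [DecidableEq G] [DecidableEq M] [Field k]
variable (P : MatchedPairData G M)

/-- The product of `H = kM ⋉ k(G)`, given on the basis by
`(s ⊗ δ_u)(t ⊗ δ_v) = δ_{u, t ▷ v} (st ⊗ δ_v)`.  Here `H` is modelled as `M × G → k`,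
with `(s, u)` indexing the basis vector `s ⊗ δ_u`. -/
def mulH (F K : M × G → k) : M × G → k := fun p =>
  ∑ s : M, ∑ t : M, if P.DM.mul s t = p.1 then F (s, P.act t p.2) * K (t, p.2) else 0

/-- The coproduct of `H = kM ⋉ k(G)`, given on the basis by
`Δ(s ⊗ δ_u) = Σ_{xy=u} (s ⊗ δ_x) ⊗ ((s ◁ x) ⊗ δ_y)`.  `H ⊗ H` is modelled as
`(M × G) × (M × G) → k`. -/
def DeltaH (F : M × G → k) : (M × G) × (M × G) → k := fun q =>
  if q.2.1 = P.coact q.1.1 q.1.2 then F (q.1.1, P.DG.mul q.1.2 q.2.2) else 0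

/-- The antipode on basis elements: `S(s ⊗ δ_u) = (s ◁ u)^i ⊗ δ_{(s ▷ u)^i}`. -/
def bS (b : M × G) : M × G :=
  (P.DM.inv (P.coact b.1 b.2), P.DG.inv (P.act b.1 b.2))

/-- The antipode of `H = kM ⋉ k(G)`, the linear extension of `bS`. -/
def SH (F : M × G → k) : M × G → k := fun p =>
  ∑ b : M × G, if bS P b = p then F b else 0

/-- The multiplication map `· : H ⊗ H → H` applied to an element of `H ⊗ H`. -/
def mH (Phi : (M × G) × (M × G) → k) : M × G → k := fun p =>
  ∑ s : M, ∑ t : M, if P.DM.mul s t = p.1 then Phi ((s, P.act t p.2), (t, p.2)) else 0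

/-- The counit `ε : H → H_J = kJ_M ⊗ k(J_G)`, `ε(s ⊗ δ_u) = ss^i ⊗ δ_u` if `u ∈ J_G`,
and `0` otherwise; its image is viewed inside `H` (supported on `J_M × J_G`). -/
def epsH [DecidablePred (· ∈ P.DG.J)] (F : M × G → k) : M × G → k := fun p =>
  if p.2 ∈ P.DG.J then
    ∑ s : M, if P.DM.mul s (P.DM.inv s) = p.1 then F (s, p.2) else 0
  else 0

/-- The unit `η : H_J → H`, `η(j ⊗ δ_n) = Σ_{n = z z^i} j ⊗ δ_z`, with `H_J`
viewed inside `H` (supported on `J_M × J_G`). -/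
def etaH (h : M × G → k) : M × G → k := fun p =>
  h (p.1, P.DG.mul p.2 (P.DG.inv p.2))

/-- `S ⊗ id` on `H ⊗ H`. -/
def SidH (Phi : (M × G) × (M × G) → k) : (M × G) × (M × G) → k := fun q =>
  ∑ b : M × G, if bS P b = q.1 then Phi (b, q.2) else 0

/-- `id ⊗ S` on `H ⊗ H`. -/
def idSH (Phi : (M × G) × (M × G) → k) : (M × G) × (M × G) → k := fun q =>
  ∑ b : M × G, if bS P b = q.2 then Phi (q.1, b) else 0

section AuxLemmas

variable {P} (hP : IsMatchedPair P)
include hP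

lemma aux_inv_mul_memM (t : M) : P.DM.mul (P.DM.inv t) t ∈ P.DM.J := by
  rw [← hP.almostGroup_M.mul_inv_comm]; exact hP.almostGroup_M.mul_inv_mem t

lemma aux_inv_mul_memG (u : G) : P.DG.mul (P.DG.inv u) u ∈ P.DG.J := by
  rw [← hP.almostGroup_G.mul_inv_comm]; exact hP.almostGroup_G.mul_inv_mem u

/-- `s^i ▷ (s ▷ u) = u`. -/
lemma aux_act_inv_act (s : M) (u : G) :
    P.act (P.DM.inv s) (P.act s u) = u := by
  rw [← hP.mul_act]
  exact hP.actJM _ (aux_inv_mul_memM hP s) u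

/-- `s ▷ (s^i ▷ u) = u`. -/
lemma aux_act_act_inv (s : M) (u : G) :
    P.act s (P.act (P.DM.inv s) u) = u := by
  rw [← hP.mul_act]
  exact hP.actJM _ (hP.almostGroup_M.mul_inv_mem s) u

/-- `(s ◁ u) ▷ u^i = (s ▷ u)^i`. -/
lemma aux_act_coact_inv (s : M) (u : G) :
    P.act (P.coact s u) (P.DG.inv u) = P.DG.inv (P.act s u) := by
  conv_lhs => rw [← hP.inv_act s u]
  exact aux_act_act_inv hP _ _

/-- `(s ◁ u) ◁ u^i = s`. -/
lemma aux_coact_coact_inv (s : M) (u : G) :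
    P.coact (P.coact s u) (P.DG.inv u) = s := by
  rw [← hP.coact_mul]
  exact hP.coactJG s _ (hP.almostGroup_G.mul_inv_mem u)

/-- `a^i ◁ (a ▷ u) = (a ◁ u)^i`. -/
lemma aux_coact_inv_act (a : M) (u : G) :
    P.coact (P.DM.inv a) (P.act a u) = P.DM.inv (P.coact a u) := by
  conv_lhs => rw [← hP.inv_coact a u, ← hP.coact_mul]
  exact hP.coactJG _ _ (aux_inv_mul_memG hP (P.act a u))

/-- `(a ◁ w)^i (a ◁ w) = a^i a`. -/
lemma aux_inv_coact_mul_self (a : M) (w : G) :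
    P.DM.mul (P.DM.inv (P.coact a w)) (P.coact a w) = P.DM.mul (P.DM.inv a) a := by
  have h := hP.mul_coact (P.DM.inv a) a w
  rw [hP.coactJM _ (aux_inv_mul_memM hP a) w, aux_coact_inv_act hP a w] at h
  exact h.symm

/-- `u u^i = (s ▷ u)(s ▷ u)^i`. -/
lemma aux_act_mul_inv (s : M) (u : G) :
    P.DG.mul u (P.DG.inv u) =
      P.DG.mul (P.act s u) (P.DG.inv (P.act s u)) := by
  have h := hP.act_mul s u (P.DG.inv u)
  rw [hP.actJG s _ (hP.almostGroup_G.mul_inv_mem u), aux_act_coact_inv hP s u] at h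
  exact h

end AuxLemmas

/-- merge `if c then (if d then x else 0) else 0`. -/
private lemma ite_ite_zero {k : Type*} [Field k] (c d : Prop) [Decidable c] [Decidable d]
    (x : k) : (if c then (if d then x else 0) else 0) = if c ∧ d then x else 0 := by
  by_cases hc : c <;> by_cases hd : d <;> simp [hc, hd]

private lemma ite_sum_zero {k ι : Type*} [Field k] (c : Prop) [Decidable c]
    (s : Finset ι) (f : ι → k) :
    (if c then ∑ x ∈ s, f x else 0) = ∑ x ∈ s, if c then f x else 0 := by
  split <;> simp

private lemma sum_ite_and_eq {k α : Type*} [Field k] [Fintype α] [DecidableEq α]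
    (c : α) (Q : α → Prop) [DecidablePred Q] (f : α → k) :
    (∑ x : α, if Q x ∧ x = c then f x else 0) = if Q c then f c else 0 := by
  rw [Finset.sum_eq_single c]
  · by_cases h : Q c <;> simp [h]
  · intro b _ hb
    exact if_neg fun h => hb h.2
  · exact fun h => absurd (Finset.mem_univ _) h

/-- In the bicrossproduct `H = kM ⋉ k(G)`, the antipode
`S(s ⊗ δ_u) = (s ◁ u)^i ⊗ δ_{(s ▷ u)^i}` satisfies
`·(S ⊗ id)Δ = ·(id ⊗ S)Δ = η ∘ ε`. -/
theorem bicross_antipode_axiom [DecidablePred (· ∈ P.DG.J)]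
    (hP : IsMatchedPair P) (F : M × G → k) :
    mH P (SidH P (DeltaH P F)) = etaH P (epsH P F) ∧
      mH P (idSH P (DeltaH P F)) = etaH P (epsH P F) := by
  have hG := hP.almostGroup_G
  have hM := hP.almostGroup_M
  have hbS : ∀ b : M × G, bS P (bS P b) = b := by
    rintro ⟨a, w⟩
    have h1 := hP.inv_coact a w
    have h2 := hP.inv_act a w
    simp only [bS]
    rw [h1, h2, hM.inv_inv, hG.inv_inv]
  have hsum : ∀ (g : M × G → k) (q : M × G),
      (∑ b : M × G, if bS P b = q then g b else 0) = g (bS P q) := by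
    intro g q
    rw [Finset.sum_eq_single (bS P q)]
    · rw [if_pos (hbS q)]
    · intro b _ hb
      refine if_neg fun h => hb ?_
      rw [← hbS b, h]
    · exact fun h => absurd (Finset.mem_univ _) h
  constructor
  · funext p
    obtain ⟨p1, p2⟩ := p
    simp only [mH, SidH, etaH, epsH]
    simp only [hsum]
    simp only [DeltaH, bS, hP.inv_coact]
    rw [if_pos (hG.mul_inv_mem p2), hG.mul_inv_comm p2]
    simp only [ite_ite_zero, sum_ite_and_eq]
    simp only [aux_act_act_inv hP]
    have hji : ∀ s : M,
        P.DM.inv (P.coact (P.DM.inv (P.coact s (P.act (P.DM.inv s) p2)))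
          (P.DG.inv p2)) = s := by
      intro s
      have h := hP.inv_coact s (P.act (P.DM.inv s) p2)
      rw [aux_act_act_inv hP s p2] at h
      rw [h, hM.inv_inv]
    refine Fintype.sum_bijective
      (fun s => P.DM.inv (P.coact s (P.act (P.DM.inv s) p2)))
      (Finite.injective_iff_bijective.mp fun a b h => ?_) _ _ fun s => ?_
    · rw [← hji a, h, hji b]
    · have hcond : P.DM.mul (P.DM.inv (P.coact s (P.act (P.DM.inv s) p2)))
          (P.DM.inv (P.DM.inv (P.coact s (P.act (P.DM.inv s) p2)))) =
          P.DM.mul s (P.DM.inv s) := by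
        rw [hM.inv_inv, aux_inv_coact_mul_self hP, ← hM.mul_inv_comm]
      simp only [hcond]
  · funext p
    obtain ⟨p1, p2⟩ := p
    simp only [mH, idSH, etaH, epsH]
    simp only [hsum]
    simp only [DeltaH, bS]
    rw [if_pos (hG.mul_inv_mem p2)]
    simp only [← aux_act_mul_inv hP]
    rw [Finset.sum_comm]
    have hcond : ∀ t s : M,
        (P.DM.inv (P.coact t p2) = P.coact s (P.act t p2)) ↔ s = P.DM.inv t := by
      intro t s
      constructor
      · intro h
        have h2 : P.coact s (P.act t p2) = P.coact (P.DM.inv t) (P.act t p2) := by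
          rw [← h, aux_coact_inv_act hP]
        have h3 := congrArg (fun x => P.coact x (P.DG.inv (P.act t p2))) h2
        simpa only [aux_coact_coact_inv hP] using h3
      · rintro rfl
        rw [aux_coact_inv_act hP]
    simp only [hcond]
    simp only [ite_ite_zero, sum_ite_and_eq]
    refine Fintype.sum_bijective P.DM.inv hM.inv_bijective _ _ fun t => ?_
    rw [hM.inv_inv]
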